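/- Define F(τ) = ∫_ℝ (2 − (1+t)₊^τ − (1−t)₊^τ)/|t|^{1+2s} dt for τ ∈ (0, 2s), where s ∈ (0,1). Then F is strictly concave on (0, 2s). -/

import Mathlib

/-!
For fixed `t`, the map `τ ↦ a ^ τ = exp (τ log a)` is convex on `τ > 0` for every `a ≥ 0`, and
strictly convex when `a > 0, a ≠ 1`. Hence the integrand is concave in `τ` for every `t`, and
strictly concave for `t > 0` (where `a = 1 + t > 1`), so integrating a strictly positive gap over
`t > 0` gives strict concavity of the integral. Integrability comes from the second-order
cancellation `|2 - (1 + t) ^ τ - (1 - t) ^ τ| ≤ 16 t ^ 2` near `t = 0`, which beats the singularity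
`|t| ^ (1 + 2 s)` since `s < 1`, and from the growth `|t| ^ τ` with `τ < 2 s` at infinity.
-/

open MeasureTheory Real Set

theorem strictConvexOn_rpow_left {b : ℝ} (hb : 0 < b) (hb1 : b ≠ 1) :
    StrictConvexOn ℝ univ fun x : ℝ => b ^ x := by
  refine ⟨convex_univ, fun x _ y _ hxy a c ha hc hac => ?_⟩
  have hlog : log b ≠ 0 := log_ne_zero_of_pos_of_ne_one hb hb1
  simp only [smul_eq_mul, rpow_def_of_pos hb]
  calc exp (log b * (a * x + c * y)) = exp (a * (log b * x) + c * (log b * y)) := by ring_nf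
    _ < a * exp (log b * x) + c * exp (log b * y) :=
      strictConvexOn_exp.2 trivial trivial (by simpa [hlog] using hxy) ha hc hac

theorem convexOn_rpow_left_Ioi {b : ℝ} (hb : 0 ≤ b) :
    ConvexOn ℝ (Ioi 0) fun x : ℝ => b ^ x := by
  rcases hb.eq_or_lt with rfl | hb
  · exact (convexOn_const 0 (convex_Ioi 0)).congr fun x hx => (zero_rpow (ne_of_gt hx)).symm
  · exact (convexOn_rpow_left hb).subset (subset_univ _) (convex_Ioi 0)

theorem StrictConcaveOn.div_const {s : Set ℝ} {f : ℝ → ℝ} (hf : StrictConcaveOn ℝ s f) {c : ℝ}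
    (hc : 0 < c) : StrictConcaveOn ℝ s fun x => f x / c := by
  refine ⟨hf.1, fun x hx y hy hxy a b ha hb hab => ?_⟩
  simp only [smul_eq_mul, ← mul_div_assoc, ← add_div]
  exact div_lt_div_of_pos_right (hf.2 hx hy hxy ha hb hab) hc

theorem strictConcaveOn_integral {α : Type*} [MeasurableSpace α] {μ : Measure α} {s : Set ℝ}
    {f : ℝ → α → ℝ} {U : Set α} (hint : ∀ x ∈ s, Integrable (f x) μ)
    (hconc : ∀ᵐ t ∂μ, ConcaveOn ℝ s (f · t)) (hU : μ U ≠ 0)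
    (hstrict : ∀ t ∈ U, StrictConcaveOn ℝ s (f · t)) :
    StrictConcaveOn ℝ s fun x => ∫ t, f x t ∂μ := by
  obtain ⟨t₀, ht₀⟩ := nonempty_of_measure_ne_zero hU
  have hs := (hstrict t₀ ht₀).1
  refine ⟨hs, fun x hx y hy hxy a b ha hb hab => ?_⟩
  have hxy_mem : a • x + b • y ∈ s := hs hx hy ha.le hb.le hab
  have hcomb : Integrable (fun t => a * f x t + b * f y t) μ :=
    ((hint x hx).const_mul a).add ((hint y hy).const_mul b)
  have hgap_nonneg : 0 ≤ᵐ[μ] fun t => f (a • x + b • y) t - (a * f x t + b * f y t) :=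
    hconc.mono fun t ht => sub_nonneg.2 (ht.2 hx hy ha.le hb.le hab)
  have hgap_pos : 0 < ∫ t, f (a • x + b • y) t - (a * f x t + b * f y t) ∂μ := by
    rw [integral_pos_iff_support_of_nonneg_ae hgap_nonneg ((hint _ hxy_mem).sub hcomb)]
    exact (pos_iff_ne_zero.2 hU).trans_le <| measure_mono fun t ht =>
      (sub_pos.2 ((hstrict t ht).2 hx hy hxy ha hb hab)).ne'
  rw [integral_sub (hint _ hxy_mem) hcomb, integral_add ((hint x hx).const_mul a)
    ((hint y hy).const_mul b), integral_const_mul, integral_const_mul] at hgap_pos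
  simpa only [smul_eq_mul] using sub_pos.1 hgap_pos

theorem integrable_of_even_of_integrableOn_Ioi {E : Type*} [NormedAddCommGroup E] {f : ℝ → E}
    (heven : Function.Even f) (h : IntegrableOn f (Ioi 0)) : Integrable f := by
  have hIio : IntegrableOn f (Iio 0) := by
    rw [← (Measure.measurePreserving_neg volume).integrableOn_comp_preimage
      (Homeomorph.neg ℝ).measurableEmbedding]
    simpa [Function.comp_def, funext heven] using h
  rw [← integrableOn_univ, ← Iio_union_Ici, integrableOn_union]
  refine ⟨hIio, ?_⟩
  rwa [integrableOn_Ici_iff_integrableOn_Ioi]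

theorem abs_rpow_sub_one_le {p x : ℝ} (hp : |p| ≤ 1) (hx : 1 / 2 ≤ x) :
    |x ^ p - 1| ≤ 4 * |x - 1| := by
  have hderiv : ∀ y ∈ Ici (1 / 2 : ℝ),
      HasDerivWithinAt (fun y : ℝ => y ^ p) (p * y ^ (p - 1)) (Ici (1 / 2)) y := fun y hy =>
    (hasDerivAt_rpow_const (Or.inl (by linarith [mem_Ici.1 hy]))).hasDerivWithinAt
  have hbound : ∀ y ∈ Ici (1 / 2 : ℝ), ‖p * y ^ (p - 1)‖ ≤ 4 := by
    intro y hy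
    have hy0 : 0 < y := by linarith [mem_Ici.1 hy]
    have hp' := abs_le.1 hp
    calc ‖p * y ^ (p - 1)‖ = |p| * y ^ (p - 1) := by
          rw [norm_mul, norm_eq_abs, norm_of_nonneg (rpow_nonneg hy0.le _)]
      _ ≤ 1 * (1 / 2 : ℝ) ^ (p - 1) :=
          mul_le_mul hp (rpow_le_rpow_of_nonpos (by norm_num) hy (by linarith))
            (rpow_nonneg hy0.le _) zero_le_one
      _ ≤ (1 / 2 : ℝ) ^ (-2 : ℝ) := by
          rw [one_mul]
          exact rpow_le_rpow_of_exponent_ge (by norm_num) (by norm_num) (by linarith)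
      _ = 4 := by norm_num [rpow_neg, rpow_two]
  simpa using (convex_Ici _).norm_image_sub_le_of_norm_hasDerivWithin_le hderiv hbound
    (show (1 : ℝ) ∈ Ici (1 / 2) by norm_num) hx

theorem abs_rpow_sub_one_sub_mul_le {τ x : ℝ} (hτ0 : 0 ≤ τ) (hτ2 : τ ≤ 2) (hx : 1 / 2 ≤ x) :
    |x ^ τ - 1 - τ * (x - 1)| ≤ 8 * (x - 1) ^ 2 := by
  have hsub : uIcc 1 x ⊆ Ici (1 / 2 : ℝ) :=
    ordConnected_Ici.uIcc_subset (by norm_num : (1 : ℝ) ∈ Ici (1 / 2)) hx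
  have hderiv : ∀ y ∈ uIcc 1 x, HasDerivWithinAt (fun y : ℝ => y ^ τ - 1 - τ * (y - 1))
      (τ * y ^ (τ - 1) - τ * 1) (uIcc 1 x) y := fun y hy =>
    (((hasDerivAt_rpow_const (Or.inl (by linarith [mem_Ici.1 (hsub hy)]))).sub_const 1).sub
      (((hasDerivAt_id y).sub_const 1).const_mul τ)).hasDerivWithinAt
  have hbound : ∀ y ∈ uIcc 1 x, ‖τ * y ^ (τ - 1) - τ * 1‖ ≤ 8 * |x - 1| := by
    intro y hy
    have hyx : |y - 1| ≤ |x - 1| := by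
      rw [← Real.dist_eq, ← Real.dist_eq, dist_comm, dist_comm x]
      exact Real.dist_left_le_of_mem_uIcc hy
    have hp : |τ - 1| ≤ 1 := abs_le.2 ⟨by linarith, by linarith⟩
    calc ‖τ * y ^ (τ - 1) - τ * 1‖ = τ * |y ^ (τ - 1) - 1| := by
          rw [← mul_sub, norm_mul, norm_eq_abs, norm_eq_abs, abs_of_nonneg hτ0]
      _ ≤ 2 * (4 * |x - 1|) := by
          gcongr
          exact (abs_rpow_sub_one_le hp (mem_Ici.1 (hsub hy))).trans (by gcongr)
      _ = 8 * |x - 1| := by ring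
  have key := (convex_uIcc 1 x).norm_image_sub_le_of_norm_hasDerivWithin_le hderiv hbound
    left_mem_uIcc right_mem_uIcc
  simp only [one_rpow, sub_self, mul_zero, norm_eq_abs] at key
  calc |x ^ τ - 1 - τ * (x - 1)| = |x ^ τ - 1 - τ * (x - 1) - 0| := by rw [sub_zero]
    _ ≤ 8 * |x - 1| * |x - 1| := key
    _ = 8 * (x - 1) ^ 2 := by rw [mul_assoc, abs_mul_abs_self, sq]

theorem abs_two_sub_rpow_sub_rpow_le {τ t : ℝ} (hτ0 : 0 ≤ τ) (hτ2 : τ ≤ 2) (ht : |t| ≤ 1 / 2) :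
    |2 - (1 + t) ^ τ - (1 - t) ^ τ| ≤ 16 * t ^ 2 := by
  obtain ⟨ht₁, ht₂⟩ := abs_le.1 ht
  have hplus := abs_rpow_sub_one_sub_mul_le hτ0 hτ2 (x := 1 + t) (by linarith)
  have hminus := abs_rpow_sub_one_sub_mul_le hτ0 hτ2 (x := 1 - t) (by linarith)
  calc |2 - (1 + t) ^ τ - (1 - t) ^ τ|
        = |((1 + t) ^ τ - 1 - τ * (1 + t - 1)) + ((1 - t) ^ τ - 1 - τ * (1 - t - 1))| := by
          rw [← abs_neg]; ring_nf
    _ ≤ 8 * (1 + t - 1) ^ 2 + 8 * (1 - t - 1) ^ 2 :=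
          (abs_add_le _ _).trans (add_le_add hplus hminus)
    _ = 16 * t ^ 2 := by ring

noncomputable def fracIntegrand (s τ t : ℝ) : ℝ :=
  (2 - (max (1 + t) 0) ^ τ - (max (1 - t) 0) ^ τ) / |t| ^ (1 + 2 * s)

theorem even_fracIntegrand (s τ : ℝ) : Function.Even (fracIntegrand s τ) := by
  intro t
  simp only [fracIntegrand, abs_neg, ← sub_eq_add_neg, sub_neg_eq_add]
  ring

theorem measurable_fracIntegrand (s τ : ℝ) : Measurable (fracIntegrand s τ) := by
  unfold fracIntegrand
  fun_prop

theorem integrableOn_Ioc_fracIntegrand {s τ : ℝ} (hs : s < 1) (hτ0 : 0 ≤ τ) (hτ2 : τ ≤ 2) :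
    IntegrableOn (fracIntegrand s τ) (Ioc 0 (1 / 2)) := by
  have hmaj : IntegrableOn (fun t : ℝ => 16 * t ^ (1 - 2 * s)) (Ioc 0 (1 / 2)) :=
    (intervalIntegral.intervalIntegrable_rpow' (by linarith)).1.const_mul 16
  refine hmaj.mono' (measurable_fracIntegrand s τ).aestronglyMeasurable.restrict
    (ae_restrict_of_forall_mem measurableSet_Ioc fun t ⟨ht0, ht⟩ => ?_)
  have hden : 0 < t ^ (1 + 2 * s) := rpow_pos_of_pos ht0 _
  calc ‖fracIntegrand s τ t‖ = |2 - (1 + t) ^ τ - (1 - t) ^ τ| / t ^ (1 + 2 * s) := by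
        rw [fracIntegrand, max_eq_left (by linarith), max_eq_left (by linarith), abs_of_pos ht0,
          norm_div, norm_eq_abs, norm_of_nonneg hden.le]
    _ ≤ 16 * t ^ 2 / t ^ (1 + 2 * s) := by
        gcongr
        exact abs_two_sub_rpow_sub_rpow_le hτ0 hτ2 (by rw [abs_of_pos ht0]; exact ht)
    _ = 16 * t ^ (1 - 2 * s) := by
        rw [show 1 - 2 * s = 2 - (1 + 2 * s) by ring, rpow_sub ht0, rpow_two, mul_div_assoc]

theorem integrableOn_Ioi_fracIntegrand {s τ : ℝ} (hτ0 : 0 ≤ τ) (hτs : τ < 2 * s) :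
    IntegrableOn (fracIntegrand s τ) (Ioi (1 / 2)) := by
  have hmaj : IntegrableOn (fun t : ℝ => 2 * 3 ^ τ * t ^ (τ - (1 + 2 * s))) (Ioi (1 / 2)) :=
    ((integrableOn_Ioi_rpow_iff (by norm_num)).2 (by linarith)).const_mul _
  refine hmaj.mono' (measurable_fracIntegrand s τ).aestronglyMeasurable.restrict
    (ae_restrict_of_forall_mem measurableSet_Ioi fun t (ht : 1 / 2 < t) => ?_)
  have ht0 : 0 < t := by linarith
  have hden : 0 < t ^ (1 + 2 * s) := rpow_pos_of_pos ht0 _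
  have hbound : ∀ u ≤ 3 * t, 0 ≤ (max u 0) ^ τ ∧ (max u 0) ^ τ ≤ (3 * t) ^ τ := fun u hu =>
    ⟨rpow_nonneg (le_max_right _ _) _,
      rpow_le_rpow (le_max_right _ _) (max_le hu (by linarith)) hτ0⟩
  obtain ⟨h₁, h₂⟩ := hbound (1 + t) (by linarith)
  obtain ⟨h₃, h₄⟩ := hbound (1 - t) (by linarith)
  have hone : 1 ≤ (3 * t) ^ τ := one_le_rpow (by linarith) hτ0
  have hnum : |2 - (max (1 + t) 0) ^ τ - (max (1 - t) 0) ^ τ| ≤ 2 * (3 * t) ^ τ :=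
    abs_le.2 ⟨by linarith, by linarith⟩
  calc ‖fracIntegrand s τ t‖
        = |2 - (max (1 + t) 0) ^ τ - (max (1 - t) 0) ^ τ| / t ^ (1 + 2 * s) := by
        rw [fracIntegrand, abs_of_pos ht0, norm_div, norm_eq_abs, norm_of_nonneg hden.le]
    _ ≤ 2 * (3 * t) ^ τ / t ^ (1 + 2 * s) := by gcongr
    _ = 2 * 3 ^ τ * t ^ (τ - (1 + 2 * s)) := by
        rw [mul_rpow (by norm_num) ht0.le, rpow_sub ht0]; ring

theorem integrable_fracIntegrand {s τ : ℝ} (hs : s < 1) (hτ0 : 0 ≤ τ) (hτs : τ < 2 * s) :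
    Integrable (fracIntegrand s τ) := by
  refine integrable_of_even_of_integrableOn_Ioi (even_fracIntegrand s τ) ?_
  rw [← Ioc_union_Ioi_eq_Ioi (by norm_num : (0 : ℝ) ≤ 1 / 2), integrableOn_union]
  exact ⟨integrableOn_Ioc_fracIntegrand hs hτ0 (by linarith),
    integrableOn_Ioi_fracIntegrand hτ0 hτs⟩

theorem concaveOn_fracIntegrand (s t : ℝ) : ConcaveOn ℝ (Ioi 0) (fracIntegrand s · t) := by
  have h := (((concaveOn_const 2 (convex_Ioi 0)).sub
    (convexOn_rpow_left_Ioi (le_max_right (1 + t) 0))).sub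
    (convexOn_rpow_left_Ioi (le_max_right (1 - t) 0))).smul
    (inv_nonneg.2 (rpow_nonneg (abs_nonneg t) (1 + 2 * s)))
  simpa only [fracIntegrand, div_eq_inv_mul, smul_eq_mul, Pi.sub_apply] using h

theorem strictConcaveOn_fracIntegrand (s : ℝ) {t : ℝ} (ht : 0 < t) :
    StrictConcaveOn ℝ (Ioi 0) (fracIntegrand s · t) := by
  have hplus : StrictConvexOn ℝ (Ioi 0) fun τ : ℝ => (max (1 + t) 0) ^ τ := by
    rw [max_eq_left (by linarith)]
    exact (strictConvexOn_rpow_left (by linarith) (by linarith)).subset (subset_univ _)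
      (convex_Ioi 0)
  exact (((concaveOn_const 2 (convex_Ioi 0)).sub_strictConvexOn hplus).sub_convexOn
    (convexOn_rpow_left_Ioi (le_max_right (1 - t) 0))).div_const
    (rpow_pos_of_pos (abs_pos.2 ht.ne') _)

theorem stmt_2 (s : ℝ) (hs : s ∈ Set.Ioo (0:ℝ) 1) :
    StrictConcaveOn ℝ (Set.Ioo 0 (2*s)) (fun τ : ℝ =>
      ∫ t : ℝ, (2 - (max (1 + t) 0) ^ τ - (max (1 - t) 0) ^ τ) / |t| ^ (1 + 2*s)) := by
  have hsub : Ioo 0 (2 * s) ⊆ Ioi 0 := Ioo_subset_Ioi_self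
  exact strictConcaveOn_integral (U := Ioi 0)
    (fun τ hτ => integrable_fracIntegrand hs.2 hτ.1.le hτ.2)
    (ae_of_all _ fun t => (concaveOn_fracIntegrand s t).subset hsub (convex_Ioo _ _))
    (by simp)
    (fun t ht => (strictConcaveOn_fracIntegrand s ht).subset hsub (convex_Ioo _ _))
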